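/- (Joint optimality of the two-step update.) Fix a positive pmf q2 on Z. Let q1* be the pmf on X with q1*(x) ∝ exp(∑_z q2(z)·log ℓ(x,z)), and then let q2** be the pmf on Z with q2**(z) ∝ π(z)·exp(∑_x q1*(x)·log ℓ(x,z)). Then one full generate-reflect round does not decrease the ELBO: L(q1*, q2**) ≥ L(q1*, q2) ≥ L(q1, q2) for every pmf q1 on X; in particular L(q1*, q2**) ≥ L(q1, q2) for every pmf q1 on X. -/

import Mathlib

/-!
Both half steps are exact coordinate maximizations. For pmfs `q1`, `q2` the ELBO splits as
`-KL(q1 ‖ w₁) - KL(q2 ‖ π)` with `w₁(x) = exp (∑_z q2(z) log ℓ(x,z))`, and also as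
`-KL(q2 ‖ w₂) + H(q1)` with `w₂(z) = π(z) exp (∑_x q1(x) log ℓ(x,z))`. By Gibbs' inequality,
among pmfs `q` the divergence `KL(q ‖ w)` from positive weights `w` is smallest at `q = w / ∑ w`,
which is `q1*` in the first splitting and `q2**` in the second.
-/

open Finset

noncomputable section

/-- `q` is a probability mass function on the finite type `T`. -/
def IsPMF {T : Type*} [Fintype T] (q : T → ℝ) : Prop :=
  (∀ t, 0 ≤ q t) ∧ ∑ t, q t = 1

/-- `q` is a strictly positive probability mass function on the finite type `T`. -/
def IsPosPMF {T : Type*} [Fintype T] (q : T → ℝ) : Prop :=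
  (∀ t, 0 < q t) ∧ ∑ t, q t = 1

/-- KL divergence `KL(q ‖ p)`; terms with `q t = 0` contribute `0` since `0 * log _ = 0`. -/
def KL {T : Type*} [Fintype T] (q p : T → ℝ) : ℝ :=
  ∑ t, q t * Real.log (q t / p t)

/-- Shannon entropy `H(q)`; terms with `q t = 0` contribute `0`. -/
def entropy {T : Type*} [Fintype T] (q : T → ℝ) : ℝ :=
  -∑ t, q t * Real.log (q t)

/-- Mean-field ELBO `L(q1, q2)`; terms with `q1 x * q2 z = 0` contribute `0`. -/
def ELBO {X Z : Type*} [Fintype X] [Fintype Z] (ℓ : X → Z → ℝ) (π : Z → ℝ)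
    (q1 : X → ℝ) (q2 : Z → ℝ) : ℝ :=
  ∑ x, ∑ z, q1 x * q2 z * Real.log (ℓ x z * π z / (q1 x * q2 z))

/-- The evidence `Ev = ∑_{x,z} ℓ(x,z) π(z)`. -/
def evid {X Z : Type*} [Fintype X] [Fintype Z] (ℓ : X → Z → ℝ) (π : Z → ℝ) : ℝ :=
  ∑ x, ∑ z, ℓ x z * π z

/-- The joint posterior `post(x,z) = ℓ(x,z) π(z) / Ev` on `X × Z`. -/
def post {X Z : Type*} [Fintype X] [Fintype Z] (ℓ : X → Z → ℝ) (π : Z → ℝ) :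
    X × Z → ℝ :=
  fun p => ℓ p.1 p.2 * π p.2 / evid ℓ π

/-- The product pmf `(q1 ⊗ q2)(x,z) = q1(x) q2(z)` on `X × Z`. -/
def prodPMF {X Z : Type*} [Fintype X] [Fintype Z] (q1 : X → ℝ) (q2 : Z → ℝ) :
    X × Z → ℝ :=
  fun p => q1 p.1 * q2 p.2

open InformationTheory
open Real (exp log exp_pos log_exp log_mul log_div)

def normalized {T : Type*} [Fintype T] (w : T → ℝ) (t : T) : ℝ :=
  w t / ∑ s, w s

def generateWeight {X Z : Type*} [Fintype Z] (ℓ : X → Z → ℝ) (q2 : Z → ℝ) (x : X) : ℝ :=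
  exp (∑ z, q2 z * log (ℓ x z))

def reflectWeight {X Z : Type*} [Fintype X] (ℓ : X → Z → ℝ) (π : Z → ℝ) (q1 : X → ℝ) (z : Z) :
    ℝ :=
  π z * exp (∑ x, q1 x * log (ℓ x z))

lemma mul_mul_log_div_mul (a b : ℝ) {c : ℝ} (hc : c ≠ 0) :
    a * b * log (c / (a * b)) = a * b * log c - b * (a * log a) - a * (b * log b) := by
  rcases eq_or_ne a 0 with rfl | ha
  · simp
  rcases eq_or_ne b 0 with rfl | hb
  · simp
  rw [log_div hc (mul_ne_zero ha hb), log_mul ha hb]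
  ring

section Gibbs

variable {T : Type*} [Fintype T]

lemma nonempty_of_sum_eq_one {q : T → ℝ} (hq : ∑ t, q t = 1) : Nonempty T :=
  univ_nonempty_iff.mp (nonempty_of_sum_ne_zero (hq ▸ one_ne_zero))

lemma isPosPMF_normalized [Nonempty T] {w : T → ℝ} (hw : ∀ t, 0 < w t) :
    IsPosPMF (normalized w) := by
  have hW : 0 < ∑ s, w s := sum_pos (fun t _ => hw t) univ_nonempty
  exact ⟨fun t => div_pos (hw t) hW, by simp only [normalized, ← sum_div, div_self hW.ne']⟩

lemma mul_log_div_eq_mul_klFun_add {p q : ℝ} (hp : p ≠ 0) :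
    q * log (q / p) = p * klFun (q / p) + q - p := by
  rw [klFun_apply]
  field_simp
  ring

lemma KL_nonneg {q p : T → ℝ} (hq : ∀ t, 0 ≤ q t) (hp : ∀ t, 0 < p t)
    (hqp : ∑ t, q t = ∑ t, p t) : 0 ≤ KL q p := by
  have hKL : KL q p = ∑ t, p t * klFun (q t / p t) := by
    simp only [KL, mul_log_div_eq_mul_klFun_add (hp _).ne', sum_sub_distrib, sum_add_distrib, hqp,
      add_sub_cancel_right]
  rw [hKL]
  exact sum_nonneg fun t _ => mul_nonneg (hp t).le (klFun_nonneg (div_nonneg (hq t) (hp t).le))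

lemma KL_self (p : T → ℝ) : KL p p = 0 := by
  simp [KL]

lemma KL_eq_KL_normalized_sub {q w : T → ℝ} (hw : ∀ t, 0 < w t) (hq : ∑ t, q t = 1) :
    KL q w = KL q (normalized w) - log (∑ t, w t) := by
  have : Nonempty T := nonempty_of_sum_eq_one hq
  have hW : 0 < ∑ s, w s := sum_pos (fun t _ => hw t) univ_nonempty
  have hterm : ∀ t, q t * log (q t / normalized w t) =
      q t * log (q t / w t) + q t * log (∑ s, w s) := by
    intro t
    rcases eq_or_ne (q t) 0 with h | h
    · simp [h]
    · rw [normalized, div_div_eq_mul_div, mul_div_right_comm,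
        log_mul (div_ne_zero h (hw t).ne') hW.ne', mul_add]
  simp only [KL, hterm, sum_add_distrib, ← sum_mul, hq, one_mul, add_sub_cancel_right]

theorem KL_normalized_le {q w : T → ℝ} (hw : ∀ t, 0 < w t) (hq : IsPMF q) :
    KL (normalized w) w ≤ KL q w := by
  have : Nonempty T := nonempty_of_sum_eq_one hq.2
  have hn := isPosPMF_normalized hw
  rw [KL_eq_KL_normalized_sub hw hq.2, KL_eq_KL_normalized_sub hw hn.2, KL_self]
  linarith [KL_nonneg hq.1 hn.1 (hq.2.trans hn.2.symm)]

lemma sum_mul_log_add_entropy {q w : T → ℝ} (hw : ∀ t, w t ≠ 0) :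
    ∑ t, q t * log (w t) + entropy q = -KL q w := by
  rw [entropy, KL, ← sub_eq_add_neg, ← sum_sub_distrib, ← sum_neg_distrib]
  refine sum_congr rfl fun t _ => ?_
  rcases eq_or_ne (q t) 0 with h | h
  · simp [h]
  · rw [log_div h (hw t)]
    ring

end Gibbs

section ELBO

variable {X Z : Type*} [Fintype X] [Fintype Z] {ℓ : X → Z → ℝ} {π : Z → ℝ}
  {q1 : X → ℝ} {q2 : Z → ℝ}

lemma ELBO_eq_sum_add_entropy (hℓπ : ∀ x z, ℓ x z * π z ≠ 0) (hq1 : ∑ x, q1 x = 1)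
    (hq2 : ∑ z, q2 z = 1) :
    ELBO ℓ π q1 q2 =
      ∑ x, ∑ z, q1 x * q2 z * log (ℓ x z * π z) + entropy q1 + entropy q2 := by
  simp only [ELBO, entropy, mul_mul_log_div_mul _ _ (hℓπ _ _), sum_sub_distrib, ← sum_mul,
    ← mul_sum, hq1, hq2]
  ring

lemma ELBO_eq_neg_KL_generateWeight_sub (hℓ : ∀ x z, 0 < ℓ x z) (hπ : ∀ z, 0 < π z)
    (hq1 : ∑ x, q1 x = 1) (hq2 : ∑ z, q2 z = 1) :
    ELBO ℓ π q1 q2 = -KL q1 (generateWeight ℓ q2) - KL q2 π := by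
  have henergy : ∑ x, ∑ z, q1 x * q2 z * log (ℓ x z * π z) =
      ∑ x, q1 x * log (generateWeight ℓ q2 x) + ∑ z, q2 z * log (π z) := by
    simp only [generateWeight, log_exp, log_mul (hℓ _ _).ne' (hπ _).ne', mul_add, sum_add_distrib,
      mul_assoc, ← mul_sum, ← sum_mul, hq1, one_mul]
  rw [ELBO_eq_sum_add_entropy (fun x z => (mul_pos (hℓ x z) (hπ z)).ne') hq1 hq2, henergy]
  linarith [sum_mul_log_add_entropy (q := q1) (w := generateWeight ℓ q2) fun x => (exp_pos _).ne',
    sum_mul_log_add_entropy (q := q2) fun z => (hπ z).ne']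

lemma ELBO_eq_neg_KL_reflectWeight_add (hℓ : ∀ x z, 0 < ℓ x z) (hπ : ∀ z, 0 < π z)
    (hq1 : ∑ x, q1 x = 1) (hq2 : ∑ z, q2 z = 1) :
    ELBO ℓ π q1 q2 = -KL q2 (reflectWeight ℓ π q1) + entropy q1 := by
  have henergy : ∑ x, ∑ z, q1 x * q2 z * log (ℓ x z * π z) =
      ∑ z, q2 z * log (reflectWeight ℓ π q1 z) := by
    simp only [reflectWeight, log_mul (hπ _).ne' (exp_pos _).ne', log_exp,
      log_mul (hℓ _ _).ne' (hπ _).ne']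
    rw [sum_comm]
    refine sum_congr rfl fun z _ => ?_
    simp only [mul_comm (q1 _) (q2 z), mul_assoc, ← mul_sum, mul_add, sum_add_distrib, ← sum_mul,
      hq1, one_mul, add_comm]
  rw [ELBO_eq_sum_add_entropy (fun x z => (mul_pos (hℓ x z) (hπ z)).ne') hq1 hq2, henergy]
  linarith [sum_mul_log_add_entropy (q := q2) (w := reflectWeight ℓ π q1) fun z =>
    (mul_pos (hπ z) (exp_pos _)).ne']

theorem ELBO_le_ELBO_normalized_generateWeight (hℓ : ∀ x z, 0 < ℓ x z) (hπ : ∀ z, 0 < π z)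
    (hq1 : IsPMF q1) (hq2 : ∑ z, q2 z = 1) :
    ELBO ℓ π q1 q2 ≤ ELBO ℓ π (normalized (generateWeight ℓ q2)) q2 := by
  have : Nonempty X := nonempty_of_sum_eq_one hq1.2
  have hw : ∀ x, 0 < generateWeight ℓ q2 x := fun x => exp_pos _
  rw [ELBO_eq_neg_KL_generateWeight_sub hℓ hπ hq1.2 hq2,
    ELBO_eq_neg_KL_generateWeight_sub hℓ hπ (isPosPMF_normalized hw).2 hq2]
  linarith [KL_normalized_le hw hq1]

theorem ELBO_le_ELBO_normalized_reflectWeight (hℓ : ∀ x z, 0 < ℓ x z) (hπ : ∀ z, 0 < π z)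
    (hq1 : ∑ x, q1 x = 1) (hq2 : IsPMF q2) :
    ELBO ℓ π q1 q2 ≤ ELBO ℓ π q1 (normalized (reflectWeight ℓ π q1)) := by
  have : Nonempty Z := nonempty_of_sum_eq_one hq2.2
  have hw : ∀ z, 0 < reflectWeight ℓ π q1 z := fun z => mul_pos (hπ z) (exp_pos _)
  rw [ELBO_eq_neg_KL_reflectWeight_add hℓ hπ hq1 hq2.2,
    ELBO_eq_neg_KL_reflectWeight_add hℓ hπ hq1 (isPosPMF_normalized hw).2]
  linarith [KL_normalized_le hw hq2]

end ELBO

theorem generate_reflect_round_general {X Z : Type*} [Fintype X] [Fintype Z]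
    (ℓ : X → Z → ℝ) (π : Z → ℝ) (hℓ : ∀ x z, 0 < ℓ x z) (hπ : IsPosPMF π)
    (q2 : Z → ℝ) (hq2 : IsPosPMF q2) :
    let q1star : X → ℝ := fun x =>
      Real.exp (∑ z, q2 z * Real.log (ℓ x z)) /
        ∑ x', Real.exp (∑ z, q2 z * Real.log (ℓ x' z))
    let q2star2 : Z → ℝ := fun z =>
      π z * Real.exp (∑ x, q1star x * Real.log (ℓ x z)) /
        ∑ z', π z' * Real.exp (∑ x, q1star x * Real.log (ℓ x z'))
    (∀ q1 : X → ℝ, IsPMF q1 →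
      ELBO ℓ π q1 q2 ≤ ELBO ℓ π q1star q2 ∧
      ELBO ℓ π q1star q2 ≤ ELBO ℓ π q1star q2star2) ∧
    (∀ q1 : X → ℝ, IsPMF q1 → ELBO ℓ π q1 q2 ≤ ELBO ℓ π q1star q2star2) := by
  intro q1star q2star2
  -- `q1star` is `normalized (generateWeight ℓ q2)` and `q2star2` is
  -- `normalized (reflectWeight ℓ π q1star)` up to unfolding.
  have round : ∀ q1 : X → ℝ, IsPMF q1 →
      ELBO ℓ π q1 q2 ≤ ELBO ℓ π q1star q2 ∧ ELBO ℓ π q1star q2 ≤ ELBO ℓ π q1star q2star2 := by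
    intro q1 hq1
    have : Nonempty X := nonempty_of_sum_eq_one hq1.2
    have hq1star : ∑ x, q1star x = 1 := (isPosPMF_normalized fun x => exp_pos _).2
    exact ⟨ELBO_le_ELBO_normalized_generateWeight hℓ hπ.1 hq1 hq2.2,
      ELBO_le_ELBO_normalized_reflectWeight hℓ hπ.1 hq1star ⟨fun z => (hq2.1 z).le, hq2.2⟩⟩
  exact ⟨round, fun q1 hq1 => (round q1 hq1).1.trans (round q1 hq1).2⟩

/-- joint optimality of one full generate-reflect round:
`L(q1*, q2**) ≥ L(q1*, q2) ≥ L(q1, q2)` for every pmf `q1`. -/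
theorem generate_reflect_round {X Z : Type*} [Fintype X] [Fintype Z]
    [Nonempty X] [Nonempty Z]
    (ℓ : X → Z → ℝ) (π : Z → ℝ) (hℓ : ∀ x z, 0 < ℓ x z) (hπ : IsPosPMF π)
    (q2 : Z → ℝ) (hq2 : IsPosPMF q2) :
    let q1star : X → ℝ := fun x =>
      Real.exp (∑ z, q2 z * Real.log (ℓ x z)) /
        ∑ x', Real.exp (∑ z, q2 z * Real.log (ℓ x' z))
    let q2star2 : Z → ℝ := fun z =>
      π z * Real.exp (∑ x, q1star x * Real.log (ℓ x z)) /
        ∑ z', π z' * Real.exp (∑ x, q1star x * Real.log (ℓ x z'))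
    (∀ q1 : X → ℝ, IsPMF q1 →
      ELBO ℓ π q1 q2 ≤ ELBO ℓ π q1star q2 ∧
      ELBO ℓ π q1star q2 ≤ ELBO ℓ π q1star q2star2) ∧
    (∀ q1 : X → ℝ, IsPMF q1 → ELBO ℓ π q1 q2 ≤ ELBO ℓ π q1star q2star2) :=
  generate_reflect_round_general ℓ π hℓ hπ q2 hq2
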